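/- Let μ be a doubling measure on ℝ^d whose support J is hyperplane diffuse with constant γ > 0. Then there exists ε > 0, independent of the choices below, such that for every p ∈ J, every affine hyperplane L, and all 0 < r < R < 1, setting S₁ = B(p,R) ∩ N(L, γr/2) and S₂ = B(p, R+r) ∩ N(L, (γ+2)r), one has μ(S₁) ≤ (1−ε)·μ(S₂). -/

import Mathlib

/-!
Around every point `x` of `S₁ ∩ J`, hyperplane diffuseness at scale `2r/3` yields a point `q` of
`J` at distance `≥ 2γr/3` from `L`; a ball of radius `κr`, `κ = min (γ/6) (1/3)`, around `q`
then lies in `B(x,r) ⊆ S₂` but misses `N(L, γr/2) ⊇ S₁`. Doubling makes its measure comparable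
to that of `B(x,4r)`, so a Vitali subfamily of the balls `B(x,r)` gives
`μ S₁ ≤ K · μ (S₂ \ S₁)` with `K` independent of `p, L, r, R`, i.e. `μ S₁ ≤ K/(K+1) · μ S₂`.
-/

open Metric MeasureTheory NNReal ENNReal

section

variable {α : Type*} [MeasurableSpace α] {μ : Measure α}

lemma measure_le_ofReal_one_sub_mul_of_le_mul_sdiff {s t : Set α} (hst : s ⊆ t)
    (hs : NullMeasurableSet s μ) {K : ℝ≥0} (h : μ s ≤ K * μ (t \ s)) :
    μ s ≤ ENNReal.ofReal (1 - 1 / (K + 1)) * μ t := by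
  have ht : μ s + μ (t \ s) = μ t := by
    rw [measure_add_sdiff hs, Set.union_eq_self_of_subset_left hst]
  have hK : ENNReal.ofReal (1 - 1 / (K + 1)) = K / (K + 1) := by
    rw [one_sub_div (by positivity), add_sub_cancel_right,
      ENNReal.ofReal_div_of_pos (by positivity), ENNReal.ofReal_add K.coe_nonneg zero_le_one]
    simp
  rw [hK, div_eq_mul_inv, mul_right_comm, ← div_eq_mul_inv,
    ENNReal.le_div_iff_mul_le (by simp) (by simp)]
  calc μ s * (K + 1) = K * μ s + μ s := by ring
    _ ≤ K * μ s + K * μ (t \ s) := by gcongr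
    _ = K * μ t := by rw [← mul_add, ht]

end

section Geometry

variable {X : Type*} [PseudoMetricSpace X]

lemma ball_subset_compl_cthickening {L : Set X} {q : X} {a b : ℝ} (ha : 0 ≤ a) (hb : 0 ≤ b)
    (hq : q ∉ cthickening (a + b) L) : ball q a ⊆ (cthickening b L)ᶜ := by
  intro z hz hzL
  refine hq (cthickening_cthickening_subset ha hb L ?_)
  exact closedBall_subset_cthickening hzL a (mem_closedBall_comm.1 (ball_subset_closedBall hz))

lemma ball_subset_ball_inter_cthickening {L : Set X} {p x : X} {R r δ : ℝ} (hr : 0 ≤ r)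
    (hδ : 0 ≤ δ) (hx : x ∈ ball p R ∩ cthickening δ L) :
    ball x r ⊆ ball p (R + r) ∩ cthickening (r + δ) L := by
  refine Set.subset_inter (ball_subset_ball' ?_) ?_
  · linarith [mem_ball.1 hx.1]
  · exact ball_subset_closedBall.trans <| (closedBall_subset_cthickening hx.2 r).trans <|
      cthickening_cthickening_subset hr hδ L

lemma ball_subset_sdiff_of_notMem_cthickening {L : Set X} {p x q : X} {R r γ κ : ℝ}
    (hr : 0 < r) (hκ : 0 ≤ κ) (hκγ : κ ≤ γ / 6) (hκ3 : κ ≤ 1 / 3)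
    (hx : x ∈ ball p R ∩ cthickening (γ * r / 2) L) (hqx : dist q x < 2 * r / 3)
    (hq : q ∉ cthickening (γ * (2 * r / 3)) L) :
    ball q (κ * r) ⊆
      (ball p (R + r) ∩ cthickening ((γ + 2) * r) L) \ (ball p R ∩ cthickening (γ * r / 2) L) ∧
    ball q (κ * r) ⊆ closedBall x r := by
  have hγ : 0 ≤ γ := by linarith
  have hqx_ball : ball q (κ * r) ⊆ ball x r := ball_subset_ball' (by nlinarith)
  refine ⟨fun z hz => ⟨?_, fun hzS₁ => ?_⟩, hqx_ball.trans ball_subset_closedBall⟩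
  · refine Set.inter_subset_inter_right _ (cthickening_mono ?_ L)
      (ball_subset_ball_inter_cthickening hr.le (by positivity) hx (hqx_ball hz))
    nlinarith
  · refine ball_subset_compl_cthickening (by positivity) (by positivity) (fun hqL => hq ?_)
      hz hzS₁.2
    exact cthickening_mono (by nlinarith) L hqL

end Geometry

section Measure

variable {X : Type*} [PseudoMetricSpace X] [MeasurableSpace X] (μ : Measure X)

lemma setOf_forall_measure_ball_pos_eq_support :
    {x | ∀ r > 0, 0 < μ (ball x r)} = μ.support := by
  ext x
  exact nhds_basis_ball.mem_measureSupport.symm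

variable {μ}

lemma measure_ball_two_pow_mul_le {J : Set X} {C : ℝ≥0∞}
    (hdoub : ∀ x ∈ J, ∀ r > (0 : ℝ), μ (ball x (2 * r)) ≤ C * μ (ball x r))
    {x : X} (hx : x ∈ J) {r : ℝ} (hr : 0 < r) (n : ℕ) :
    μ (ball x (2 ^ n * r)) ≤ C ^ n * μ (ball x r) := by
  induction n with
  | zero => simp
  | succ n ih =>
    calc μ (ball x (2 ^ (n + 1) * r)) = μ (ball x (2 * (2 ^ n * r))) := by ring_nf
      _ ≤ C * μ (ball x (2 ^ n * r)) := hdoub x hx _ (by positivity)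
      _ ≤ C * (C ^ n * μ (ball x r)) := by gcongr
      _ = C ^ (n + 1) * μ (ball x r) := by ring

lemma measure_le_mul_of_forall_exists_ball_subset [TopologicalSpace.SeparableSpace X]
    [OpensMeasurableSpace X] {A T : Set X} {r ρ : ℝ} {K : ℝ≥0∞} (hr : 0 < r)
    (h : ∀ x ∈ A, ∃ q, ball q ρ ⊆ T ∧ ball q ρ ⊆ closedBall x r ∧
      μ (closedBall x (4 * r)) ≤ K * μ (ball q ρ)) :
    μ A ≤ K * μ T := by
  choose! q hqT hqx hμq using h
  obtain ⟨u, huA, hu_disj, hu_cover⟩ :=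
    Vitali.exists_disjoint_subfamily_covering_enlargement_closedBall A id (fun _ => r) r
      (fun _ _ => le_rfl) 4 (by norm_num)
  have hu_count : u.Countable :=
    (hu_disj.mono fun _ => ball_subset_closedBall).countable_of_isOpen (fun _ _ => isOpen_ball)
      fun _ _ => nonempty_ball.2 hr
  have hA_cover : A ⊆ ⋃ b ∈ u, closedBall b (4 * r) := fun a ha => by
    obtain ⟨b, hbu, hab⟩ := hu_cover a ha
    exact Set.mem_biUnion hbu (hab (mem_closedBall_self hr.le))
  have hq_disj : u.PairwiseDisjoint fun b => ball (q b) ρ :=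
    hu_disj.mono_on fun b hb => hqx b (huA hb)
  calc μ A ≤ μ (⋃ b ∈ u, closedBall b (4 * r)) := measure_mono hA_cover
    _ ≤ ∑' b : u, μ (closedBall b (4 * r)) := measure_biUnion_le μ hu_count _
    _ ≤ ∑' b : u, K * μ (ball (q b) ρ) := ENNReal.tsum_le_tsum fun b => hμq b (huA b.2)
    _ = K * μ (⋃ b ∈ u, ball (q b) ρ) := by
      rw [ENNReal.tsum_mul_left, measure_biUnion hu_count hq_disj fun _ _ => measurableSet_ball]
    _ ≤ K * μ T := by
      gcongr
      exact Set.iUnion₂_subset fun b hb => hqT b (huA hb)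

lemma measure_inter_cthickening_le_mul_sdiff [TopologicalSpace.SeparableSpace X]
    [OpensMeasurableSpace X] {J L : Set X} (hJ : μ Jᶜ = 0) {C : ℝ≥0∞}
    (hdoub : ∀ x ∈ J, ∀ r > (0 : ℝ), μ (ball x (2 * r)) ≤ C * μ (ball x r))
    {p : X} {γ κ r R : ℝ} {m : ℕ} (hr : 0 < r) (hκ : 0 < κ) (hκγ : κ ≤ γ / 6)
    (hκ3 : κ ≤ 1 / 3) (hm : 5 < 2 ^ m * κ)
    (hdiffuse : ∀ x ∈ J, ∃ q ∈ J, dist q x < 2 * r / 3 ∧ q ∉ cthickening (γ * (2 * r / 3)) L) :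
    μ (ball p R ∩ cthickening (γ * r / 2) L) ≤
      C ^ m * μ ((ball p (R + r) ∩ cthickening ((γ + 2) * r) L) \
        (ball p R ∩ cthickening (γ * r / 2) L)) := by
  rw [← measure_inter_conull hJ]
  refine measure_le_mul_of_forall_exists_ball_subset (ρ := κ * r) hr fun x hx => ?_
  obtain ⟨q, hqJ, hqx, hqL⟩ := hdiffuse x hx.2
  obtain ⟨hq_sdiff, hq_ball⟩ :=
    ball_subset_sdiff_of_notMem_cthickening hr hκ.le hκγ hκ3 hx.1 hqx hqL
  refine ⟨q, hq_sdiff, hq_ball, ?_⟩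
  calc μ (closedBall x (4 * r)) ≤ μ (ball q (2 ^ m * (κ * r))) :=
        measure_mono <| closedBall_subset_ball' <| by rw [dist_comm]; nlinarith
    _ ≤ C ^ m * μ (ball q (κ * r)) := measure_ball_two_pow_mul_le hdoub hqJ (by positivity) m

end Measure

theorem stmt2_general {d : ℕ} (μ : Measure (EuclideanSpace ℝ (Fin d)))
    (J : Set (EuclideanSpace ℝ (Fin d)))
    (hJ : J = {x | ∀ r > 0, 0 < μ (ball x r)})
    (C : ℝ≥0)
    (hdoub : ∀ x ∈ J, ∀ r > (0 : ℝ), μ (ball x (2 * r)) ≤ (C : ℝ≥0∞) * μ (ball x r))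
    (γ : ℝ) (hγ : 0 < γ)
    (hdiffuse : ∀ x ∈ J, ∀ r : ℝ, 0 < r → r ≤ 1 →
      ∀ (φ : EuclideanSpace ℝ (Fin d) →L[ℝ] ℝ) (c : ℝ), φ ≠ 0 →
        ((J ∩ ball x r) \ cthickening (γ * r) {y | φ y = c}).Nonempty) :
    ∃ ε > (0 : ℝ), ∀ p ∈ J, ∀ (φ : EuclideanSpace ℝ (Fin d) →L[ℝ] ℝ) (c : ℝ), φ ≠ 0 →
      ∀ r R : ℝ, 0 < r → r < R → R < 1 →
        μ (ball p R ∩ cthickening (γ * r / 2) {y | φ y = c})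
          ≤ ENNReal.ofReal (1 - ε) *
            μ (ball p (R + r) ∩ cthickening ((γ + 2) * r) {y | φ y = c}) := by
  set κ := min (γ / 6) (1 / 3)
  have hκ : 0 < κ := lt_min (by positivity) (by norm_num)
  obtain ⟨m, hm⟩ : ∃ m : ℕ, 5 / κ < 2 ^ m := pow_unbounded_of_one_lt _ one_lt_two
  rw [div_lt_iff₀ hκ] at hm
  have hJnull : μ Jᶜ = 0 := by
    rw [hJ, setOf_forall_measure_ball_pos_eq_support]
    exact Measure.measure_compl_support
  refine ⟨1 / ((C ^ m : ℝ≥0) + 1), by positivity, fun p _ φ c hφ r R hr hrR hR1 => ?_⟩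
  refine measure_le_ofReal_one_sub_mul_of_le_mul_sdiff
    (Set.inter_subset_inter (ball_subset_ball (by linarith)) (cthickening_mono (by nlinarith) _))
    (measurableSet_ball.inter isClosed_cthickening.measurableSet).nullMeasurableSet ?_
  rw [ENNReal.coe_pow]
  refine measure_inter_cthickening_le_mul_sdiff hJnull hdoub hr hκ (min_le_left _ _)
    (min_le_right _ _) hm fun x hx => ?_
  obtain ⟨q, ⟨hqJ, hqx⟩, hqL⟩ := hdiffuse x hx (2 * r / 3) (by positivity) (by linarith) φ c hφ
  exact ⟨q, hqJ, mem_ball.1 hqx, hqL⟩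

/-- For a doubling measure `μ` on `ℝ^d` whose support `J` is hyperplane diffuse with constant
`γ`, there is an `ε > 0` (independent of all the choices) such that for every `p ∈ J`, every
affine hyperplane `L = {y | φ y = c}` and all `0 < r < R < 1`, setting
`S₁ = B(p,R) ∩ N(L, γr/2)` and `S₂ = B(p,R+r) ∩ N(L, (γ+2)r)` one has
`μ(S₁) ≤ (1-ε)·μ(S₂)`. -/
theorem stmt2 {d : ℕ} (μ : Measure (EuclideanSpace ℝ (Fin d)))
    (J : Set (EuclideanSpace ℝ (Fin d)))
    (hJ : J = {x | ∀ r > 0, 0 < μ (ball x r)})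
    (C : ℝ≥0) (hC : 0 < C)
    (hdoub : ∀ x ∈ J, ∀ r > (0 : ℝ), μ (ball x (2 * r)) ≤ (C : ℝ≥0∞) * μ (ball x r))
    (γ : ℝ) (hγ : 0 < γ)
    (hdiffuse : ∀ x ∈ J, ∀ r : ℝ, 0 < r → r ≤ 1 →
      ∀ (φ : EuclideanSpace ℝ (Fin d) →L[ℝ] ℝ) (c : ℝ), φ ≠ 0 →
        ((J ∩ ball x r) \ cthickening (γ * r) {y | φ y = c}).Nonempty) :
    ∃ ε > (0 : ℝ), ∀ p ∈ J, ∀ (φ : EuclideanSpace ℝ (Fin d) →L[ℝ] ℝ) (c : ℝ), φ ≠ 0 →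
      ∀ r R : ℝ, 0 < r → r < R → R < 1 →
        μ (ball p R ∩ cthickening (γ * r / 2) {y | φ y = c})
          ≤ ENNReal.ofReal (1 - ε) *
            μ (ball p (R + r) ∩ cthickening ((γ + 2) * r) {y | φ y = c}) :=
  stmt2_general μ J hJ C hdoub γ hγ hdiffuse
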